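/- arXiv:2308.07680 — 5 statements merged into one kernel-verified Lean document; each statement's English description precedes it below -/
import Mathlib

section
/- Let θ ∈ ℝ³ be a constant vector, let ε > 0, and let u : ℝ³ → ℝ be twice continuously differentiable on an open set Ω ⊆ ℝ³. Then J¹_θ(J⁰_θ u) = 0 on Ω, i.e. ε∇×(ε(∇u + u·θ)) + ε·θ×(ε(∇u + u·θ)) = 0 at every point of Ω (the convection–diffusion complex property at the first level of the sequence E_{−θ} ↪ C^∞ →^{J⁰_θ} C^∞ →^{J¹_θ} C^∞ →^{J²_θ} C^∞ → 0). -/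
open Real Matrix

/-- The gradient `∇u := (∂₁u, ∂₂u, ∂₃u)` of a scalar function on ℝ³. -/
noncomputable def grad (u : (Fin 3 → ℝ) → ℝ) (x : Fin 3 → ℝ) : Fin 3 → ℝ :=
  fun i => fderiv ℝ u x (Pi.single i 1)

/-- The curl `∇×v := (∂₂v₃−∂₃v₂, ∂₃v₁−∂₁v₃, ∂₁v₂−∂₂v₁)` of a vector field on ℝ³. -/
noncomputable def curl (v : (Fin 3 → ℝ) → (Fin 3 → ℝ)) (x : Fin 3 → ℝ) : Fin 3 → ℝ :=
  ![fderiv ℝ v x (Pi.single 1 1) 2 - fderiv ℝ v x (Pi.single 2 1) 1,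
    fderiv ℝ v x (Pi.single 2 1) 0 - fderiv ℝ v x (Pi.single 0 1) 2,
    fderiv ℝ v x (Pi.single 0 1) 1 - fderiv ℝ v x (Pi.single 1 1) 0]

/-!
`J⁰_θ u = ε(∇u + uθ)`, and `∇×(ε(∇u + uθ)) = ε(∇×∇u + ∇u × θ) = ε ∇u × θ` because the curl of a
gradient vanishes by the symmetry of second derivatives. On the other side,
`θ × ε(∇u + uθ) = ε θ × ∇u` since `θ × θ = 0`, so the two terms of `J¹_θ(J⁰_θ u)` are
`ε² ∇u × θ` and `ε² θ × ∇u`, which cancel by antisymmetry of the cross product.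
-/

section Curl

variable {u : (Fin 3 → ℝ) → ℝ} {v w : (Fin 3 → ℝ) → (Fin 3 → ℝ)} {x : Fin 3 → ℝ}

theorem hasFDerivAt_grad (h : DifferentiableAt ℝ (fderiv ℝ u) x) :
    HasFDerivAt (grad u)
      (ContinuousLinearMap.pi fun i => (fderiv ℝ (fderiv ℝ u) x).flip (Pi.single i 1)) x :=
  hasFDerivAt_pi.2 fun i =>
    ((ContinuousLinearMap.apply ℝ ℝ (Pi.single i 1)).hasFDerivAt.comp x h.hasFDerivAt :)

theorem differentiableAt_grad (h : DifferentiableAt ℝ (fderiv ℝ u) x) :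
    DifferentiableAt ℝ (grad u) x :=
  (hasFDerivAt_grad h).differentiableAt

theorem fderiv_grad_apply (h : DifferentiableAt ℝ (fderiv ℝ u) x) (w : Fin 3 → ℝ) (i : Fin 3) :
    fderiv ℝ (grad u) x w i = fderiv ℝ (fderiv ℝ u) x w (Pi.single i 1) := by
  rw [(hasFDerivAt_grad h).fderiv]
  rfl

theorem curl_grad (h : DifferentiableAt ℝ (fderiv ℝ u) x) (hsymm : IsSymmSndFDerivAt ℝ u x) :
    curl (grad u) x = 0 := by
  ext i
  fin_cases i <;> simp [curl, fderiv_grad_apply h, hsymm.eq (Pi.single 2 1) (Pi.single 1 1),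
    hsymm.eq (Pi.single 2 1) (Pi.single 0 1), hsymm.eq (Pi.single 1 1) (Pi.single 0 1)]

theorem curl_add (hv : DifferentiableAt ℝ v x) (hw : DifferentiableAt ℝ w x) :
    curl (fun y => v y + w y) x = curl v x + curl w x := by
  ext i
  fin_cases i <;> simp [curl, fderiv_fun_add hv hw] <;> ring

theorem curl_const_smul (c : ℝ) : curl (fun y => c • v y) x = c • curl v x := by
  ext i
  fin_cases i <;> simp [curl, ← Pi.smul_def, fderiv_const_smul_field] <;> ring

theorem curl_smul_const (hu : DifferentiableAt ℝ u x) (θ : Fin 3 → ℝ) :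
    curl (fun y => u y • θ) x = grad u x ⨯₃ θ := by
  ext i
  fin_cases i <;> simp [curl, grad, fderiv_smul_const hu, cross_apply]

end Curl

theorem flux_complex_level_one_general
    (θ : Fin 3 → ℝ) (ε : ℝ)
    (Ω : Set (Fin 3 → ℝ)) (hΩ : IsOpen Ω)
    (u : (Fin 3 → ℝ) → ℝ) (hu : ContDiffOn ℝ 2 u Ω) :
    ∀ x ∈ Ω,
      ε • curl (fun y => ε • (grad u y + u y • θ)) x
        + ε • (θ ⨯₃ (ε • (grad u x + u x • θ))) = 0 := by
  intro x hx
  have hu2 : ContDiffAt ℝ 2 u x := hu.contDiffAt (hΩ.mem_nhds hx)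
  have hdu : DifferentiableAt ℝ u x := hu2.differentiableAt (by norm_num)
  have hd2u : DifferentiableAt ℝ (fderiv ℝ u) x :=
    (hu2.fderiv_right (m := 1) (by norm_num)).differentiableAt (by norm_num)
  have hsymm : IsSymmSndFDerivAt ℝ u x :=
    hu2.isSymmSndFDerivAt (by simp [minSmoothness_of_isRCLikeNormedField])
  rw [curl_const_smul, curl_add (differentiableAt_grad hd2u) (hdu.smul_const θ),
    curl_grad hd2u hsymm, curl_smul_const hdu]
  simp only [zero_add, map_smul, map_add, cross_self, smul_zero, add_zero, ← smul_add,
    cross_anticomm']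

/-- **First-level complex property `J¹_θ ∘ J⁰_θ = 0`.**
For a constant vector `θ ∈ ℝ³`, `ε > 0`, and `u : ℝ³ → ℝ` twice continuously
differentiable on an open set `Ω`, with `J⁰_θ u := ε • (∇u + u • θ)`, one has
`ε • ∇×(J⁰_θ u) + ε • (θ × J⁰_θ u) = 0` at every point of `Ω`. -/
theorem flux_complex_level_one
    (θ : Fin 3 → ℝ) (ε : ℝ) (hε : 0 < ε)
    (Ω : Set (Fin 3 → ℝ)) (hΩ : IsOpen Ω)
    (u : (Fin 3 → ℝ) → ℝ) (hu : ContDiffOn ℝ 2 u Ω) :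
    ∀ x ∈ Ω,
      ε • curl (fun y => ε • (grad u y + u y • θ)) x
        + ε • (θ ⨯₃ (ε • (grad u x + u x • θ))) = 0 :=
  flux_complex_level_one_general θ ε Ω hΩ u hu
end

section
/- Let θ ∈ ℝ³ be a constant vector, let ε > 0, and let v : ℝ³ → ℝ³ be twice continuously differentiable on an open set Ω ⊆ ℝ³. Then J²_θ(J¹_θ v) = 0 on Ω, i.e. ε∇·(ε(∇×v + θ×v)) + ε⟨θ, ε(∇×v + θ×v)⟩ = 0 at every point of Ω (the convection–diffusion complex property at the second level of the sequence E_{−θ} ↪ C^∞ →^{J⁰_θ} C^∞ →^{J¹_θ} C^∞ →^{J²_θ} C^∞ → 0). -/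
open Real Matrix

/-- The divergence `∇·v := ∂₁v₁ + ∂₂v₂ + ∂₃v₃` of a vector field on ℝ³. -/
noncomputable def divergence (v : (Fin 3 → ℝ) → (Fin 3 → ℝ)) (x : Fin 3 → ℝ) : ℝ :=
  ∑ i : Fin 3, fderiv ℝ v x (Pi.single i 1) i

/-!
`J²_θ (J¹_θ v) = ε² (∇·(∇×v) + ∇·(θ×v) + ⟨θ, ∇×v⟩ + ⟨θ, θ×v⟩)`. The first term vanishes by the
symmetry of second derivatives, the second equals `-⟨θ, ∇×v⟩` and cancels the third, and the
last vanishes because `θ×v ⊥ θ`.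
-/

noncomputable def curlCLM : ((Fin 3 → ℝ) →L[ℝ] (Fin 3 → ℝ)) →L[ℝ] (Fin 3 → ℝ) :=
  LinearMap.toContinuousLinearMap
    { toFun := fun A => ![A (Pi.single 1 1) 2 - A (Pi.single 2 1) 1,
        A (Pi.single 2 1) 0 - A (Pi.single 0 1) 2,
        A (Pi.single 0 1) 1 - A (Pi.single 1 1) 0]
      map_add' := fun A B => by ext i; fin_cases i <;> simp <;> ring
      map_smul' := fun c A => by ext i; fin_cases i <;> simp <;> ring }

theorem curl_eq_curlCLM_fderiv (v : (Fin 3 → ℝ) → (Fin 3 → ℝ)) :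
    curl v = fun x => curlCLM (fderiv ℝ v x) :=
  rfl

theorem hasFDerivAt_curl {v : (Fin 3 → ℝ) → (Fin 3 → ℝ)} {x : Fin 3 → ℝ}
    (hv : DifferentiableAt ℝ (fderiv ℝ v) x) :
    HasFDerivAt (curl v) (curlCLM.comp (fderiv ℝ (fderiv ℝ v) x)) x := by
  rw [curl_eq_curlCLM_fderiv]
  exact curlCLM.hasFDerivAt.comp x hv.hasFDerivAt

theorem hasFDerivAt_cross_left {E : Type*} [NormedAddCommGroup E] [NormedSpace ℝ E]
    {v : E → Fin 3 → ℝ} {L : E →L[ℝ] Fin 3 → ℝ} {x : E} (θ : Fin 3 → ℝ)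
    (hv : HasFDerivAt v L x) :
    HasFDerivAt (fun y => θ ⨯₃ v y) ((crossProduct θ).toContinuousLinearMap.comp L) x :=
  (crossProduct θ).toContinuousLinearMap.hasFDerivAt.comp x hv

section Divergence

variable {f g : (Fin 3 → ℝ) → (Fin 3 → ℝ)} {x : Fin 3 → ℝ}

theorem divergence_add (hf : DifferentiableAt ℝ f x) (hg : DifferentiableAt ℝ g x) :
    divergence (fun y => f y + g y) x = divergence f x + divergence g x := by
  simp only [divergence, fderiv_fun_add hf hg, _root_.add_apply, Pi.add_apply,
    Finset.sum_add_distrib]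

theorem divergence_const_smul (c : ℝ) :
    divergence (fun y => c • f y) x = c * divergence f x := by
  simp only [divergence, ← Pi.smul_def, fderiv_const_smul_field, _root_.smul_apply,
    Pi.smul_apply, smul_eq_mul, Finset.mul_sum]

theorem divergence_curl_eq_zero (hf : DifferentiableAt ℝ (fderiv ℝ f) x)
    (hsymm : IsSymmSndFDerivAt ℝ f x) : divergence (curl f) x = 0 := by
  have S : ∀ i j k : Fin 3, fderiv ℝ (fderiv ℝ f) x (Pi.single i 1) (Pi.single j 1) k
      = fderiv ℝ (fderiv ℝ f) x (Pi.single j 1) (Pi.single i 1) k :=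
    fun i j k => congrFun (hsymm _ _) k
  simp only [divergence, (hasFDerivAt_curl hf).fderiv, curlCLM, ContinuousLinearMap.comp_apply,
    LinearMap.coe_toContinuousLinearMap', LinearMap.coe_mk, AddHom.coe_mk, Fin.sum_univ_three,
    cons_val_zero, cons_val_one, cons_val]
  linear_combination S 0 1 2 + S 1 2 0 + S 2 0 1

theorem divergence_cross_left (θ : Fin 3 → ℝ) (hf : DifferentiableAt ℝ f x) :
    divergence (fun y => θ ⨯₃ f y) x = -(θ ⬝ᵥ curl f x) := by
  rw [divergence, (hasFDerivAt_cross_left θ hf.hasFDerivAt).fderiv]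
  simp only [ContinuousLinearMap.comp_apply, LinearMap.coe_toContinuousLinearMap', cross_apply,
    Fin.sum_univ_three, cons_val_zero, cons_val_one, cons_val, dotProduct, curl]
  ring

end Divergence

theorem flux_complex_level_two_general
    (θ : Fin 3 → ℝ) (ε : ℝ)
    (Ω : Set (Fin 3 → ℝ)) (hΩ : IsOpen Ω)
    (v : (Fin 3 → ℝ) → (Fin 3 → ℝ)) (hv : ContDiffOn ℝ 2 v Ω) :
    ∀ x ∈ Ω,
      ε * divergence (fun y => ε • (curl v y + θ ⨯₃ v y)) x
        + ε * (θ ⬝ᵥ (ε • (curl v x + θ ⨯₃ v x))) = 0 := by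
  intro x hx
  have hv₂ : ContDiffAt ℝ 2 v x := hv.contDiffAt (hΩ.mem_nhds hx)
  have hv₁ : DifferentiableAt ℝ v x := hv₂.differentiableAt (by norm_num)
  have hDv : DifferentiableAt ℝ (fderiv ℝ v) x :=
    (hv₂.fderiv_right (m := 1) (by norm_num)).differentiableAt (by norm_num)
  rw [divergence_const_smul, divergence_add (hasFDerivAt_curl hDv).differentiableAt
    (hasFDerivAt_cross_left θ hv₁.hasFDerivAt).differentiableAt,
    divergence_curl_eq_zero hDv (hv₂.isSymmSndFDerivAt (by simp)), divergence_cross_left θ hv₁,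
    dotProduct_smul, dotProduct_add, dot_self_cross, smul_eq_mul]
  ring

/-- **Second-level complex property `J²_θ ∘ J¹_θ = 0`.**
For a constant vector `θ ∈ ℝ³`, `ε > 0`, and `v : ℝ³ → ℝ³` twice continuously
differentiable on an open set `Ω`, with `J¹_θ v := ε • (∇×v + θ × v)`, one has
`ε * ∇·(J¹_θ v) + ε * ⟨θ, J¹_θ v⟩ = 0` at every point of `Ω`. -/
theorem flux_complex_level_two
    (θ : Fin 3 → ℝ) (ε : ℝ) (hε : 0 < ε)
    (Ω : Set (Fin 3 → ℝ)) (hΩ : IsOpen Ω)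
    (v : (Fin 3 → ℝ) → (Fin 3 → ℝ)) (hv : ContDiffOn ℝ 2 v Ω) :
    ∀ x ∈ Ω,
      ε * divergence (fun y => ε • (curl v y + θ ⨯₃ v y)) x
        + ε * (θ ⬝ᵥ (ε • (curl v x + θ ⨯₃ v x))) = 0 :=
  flux_complex_level_two_general θ ε Ω hΩ v hv
end

section
/- Let x₁,x₂,x₃,x₄ ∈ ℝ³ be affinely independent (i.e. det[x₂−x₁, x₃−x₁, x₄−x₁] ≠ 0), let T be their closed convex hull, and let x ∈ T with barycentric coordinates λ₁,…,λ₄ ≥ 0, Σᵢλᵢ = 1, Σᵢλᵢxᵢ = x. Set lᵢ := xᵢ − x, and given β ∈ ℝ³ set σᵢ := ⟨β, lᵢ⟩. Let ε > 0. Then |det(D^V(x))| = (Σᵢ₌₁⁴ λᵢ B₁^ε(σᵢ)) · |det[x₂−x₁, x₃−x₁, x₄−x₁]| (the paper writes this as det(D^V(x)) = 6|T|·Σᵢλᵢ B₁^ε(σᵢ), with 6|T| = |det[x₂−x₁, x₃−x₁, x₄−x₁]|). In particular, since B₁^ε is strictly positive, D^V(x) is invertible for every x ∈ T, so the L⁰-spline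 system D^V(x)·(j;φ) = B₁^ε(−σ₁)·(1,0,0,0)ᵀ has a unique solution (j,φ) ∈ ℝ³×ℝ. -/
open Real Matrix

/-!
Since `x = ∑ λᵢ xᵢ` and `∑ λᵢ = 1`, the row vector `λ` annihilates the first three columns
`lᵢ` of `D^V(x)` and sends the constant column to `1`. Subtracting `(∑ λᵢ B₁^ε(σᵢ)) • 1` from
the last column therefore leaves a matrix with `λ` in its left kernel, so by multilinearity
`det D^V(x) = (∑ λᵢ B₁^ε(σᵢ)) · det[lᵢ | 1]`, and `det[lᵢ | 1] = -det[x₂−x₁, x₃−x₁, x₄−x₁]`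
by a direct expansion. The factor `∑ λᵢ B₁^ε(σᵢ)` is positive because `B₁^ε > 0`.
-/

noncomputable def B1 (ε σ : ℝ) : ℝ := ε / ∫ x in (0:ℝ)..1, Real.exp (σ * x / ε)

theorem B1_pos {ε : ℝ} (hε : 0 < ε) (σ : ℝ) : 0 < B1 ε σ := by
  refine div_pos hε (intervalIntegral.intervalIntegral_pos_of_pos_on ?_ (fun x _ => exp_pos _)
    zero_lt_one)
  exact (by fun_prop : Continuous fun x => exp (σ * x / ε)).intervalIntegrable _ _

theorem dotProduct_pos_of_sum_eq_one {ι R : Type*} [Fintype ι] [Semiring R] [PartialOrder R]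
    [IsStrictOrderedRing R] {lam v : ι → R}
    (hlam0 : ∀ i, 0 ≤ lam i) (hlam1 : ∑ i, lam i = 1) (hv : ∀ i, 0 < v i) :
    0 < lam ⬝ᵥ v := by
  obtain ⟨i, hi⟩ : ∃ i, lam i ≠ 0 := by
    by_contra! h
    simp [h] at hlam1
  rw [dotProduct]
  exact Finset.sum_pos' (fun j _ => mul_nonneg (hlam0 j) (hv j).le)
    ⟨i, Finset.mem_univ i, mul_pos ((hlam0 i).lt_of_ne' hi) (hv i)⟩

namespace Matrix

variable {ι K : Type*} [Fintype ι] [DecidableEq ι] [Field K]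

theorem det_updateCol_eq_dotProduct_mul (A : Matrix ι ι K) (j : ι) {lam : ι → K}
    (hlam : ∑ i, lam i = 1) (hker : ∀ k ≠ j, (lam ᵥ* A) k = 0) (v : ι → K) :
    (A.updateCol j v).det = (lam ⬝ᵥ v) * (A.updateCol j 1).det := by
  have hdecomp : v = (v - (lam ⬝ᵥ v) • 1) + (lam ⬝ᵥ v) • 1 := by abel
  have hsing : (A.updateCol j (v - (lam ⬝ᵥ v) • 1)).det = 0 := by
    rw [← exists_vecMul_eq_zero_iff]
    refine ⟨lam, fun h => by simp [h] at hlam, funext fun k => ?_⟩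
    by_cases hk : k = j
    · subst hk
      simp only [vecMul, updateCol_self, Pi.zero_apply]
      rw [dotProduct_sub, dotProduct_smul, dotProduct_one, hlam, smul_eq_mul, mul_one, sub_self]
    · simpa [vecMul, hk] using hker k hk
  rw [hdecomp, det_updateCol_add, hsing, zero_add, det_updateCol_smul, ← hdecomp]


def snocCol {R : Type*} {n : ℕ} (L : Fin (n + 1) → Fin n → R) (v : Fin (n + 1) → R) :
    Matrix (Fin (n + 1)) (Fin (n + 1)) R :=
  of fun i c => if h : (c : ℕ) < n then L i ⟨c, h⟩ else v i

section snocCol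

variable {R : Type*} {n : ℕ} (L : Fin (n + 1) → Fin n → R)

theorem updateCol_last_snocCol (v w : Fin (n + 1) → R) :
    (snocCol L v).updateCol (Fin.last n) w = snocCol L w := by
  ext i c
  by_cases hc : c = Fin.last n
  · simp [hc, snocCol]
  · have : (c : ℕ) < n := Fin.val_lt_last hc
    simp [hc, snocCol, this]

theorem vecMul_snocCol_castSucc [NonUnitalNonAssocSemiring R] (lam v : Fin (n + 1) → R)
    (k : Fin n) : (lam ᵥ* snocCol L v) k.castSucc = (∑ i, lam i • L i) k := by
  simp [vecMul, dotProduct, snocCol, Finset.sum_apply]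

theorem det_snocCol_eq_dotProduct_mul [Field R] {lam : Fin (n + 1) → R}
    (hlam : ∑ i, lam i = 1) (hL : ∑ i, lam i • L i = 0) (v : Fin (n + 1) → R) :
    (snocCol L v).det = (lam ⬝ᵥ v) * (snocCol L 1).det := by
  rw [← updateCol_last_snocCol L v v, ← updateCol_last_snocCol L v 1]
  refine det_updateCol_eq_dotProduct_mul _ _ hlam (fun k hk => ?_) v
  obtain ⟨k, rfl⟩ := Fin.exists_castSucc_eq.2 hk
  rw [vecMul_snocCol_castSucc, hL, Pi.zero_apply]

end snocCol

theorem det_snocCol_sub_one {R : Type*} [CommRing R] (p : Fin 4 → Fin 3 → R) (x : Fin 3 → R) :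
    (snocCol (fun i => p i - x) 1).det = -(of fun i j : Fin 3 => (p j.succ - p 0) i).det := by
  simp [snocCol, det_succ_row_zero, Fin.sum_univ_succ, Fin.succAbove]
  ring

end Matrix

/-- **Well-posedness of the `L⁰`-spline system (Problem for `S⁰_{1⁻}`).**
For a nondegenerate tetrahedron with vertices `x₁,…,x₄` and any point `x` of its
closed convex hull with barycentric coordinates `λᵢ`, setting `lᵢ := xᵢ − x`,
`σᵢ := ⟨β, lᵢ⟩`, the matrix `D^V(x)` with rows `(lᵢᵀ, B₁^ε(σᵢ))` satisfies
`|det D^V(x)| = (Σᵢ λᵢ B₁^ε(σᵢ)) · |det[x₂−x₁, x₃−x₁, x₄−x₁]|`; in particular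
`D^V(x)` is invertible and the system `D^V(x)·(j;φ) = B₁^ε(−σ₁)·(1,0,0,0)ᵀ`
has a unique solution. -/
theorem L0_spline_wellposed
    (xv : Fin 4 → (Fin 3 → ℝ))
    (hx : Matrix.det (Matrix.of fun i j : Fin 3 => (xv j.succ - xv 0) i) ≠ 0)
    (x : Fin 3 → ℝ) (lam : Fin 4 → ℝ)
    (hlam0 : ∀ i, 0 ≤ lam i) (hlam1 : ∑ i, lam i = 1)
    (hlamx : ∑ i, lam i • xv i = x)
    (β : Fin 3 → ℝ) (ε : ℝ) (hε : 0 < ε) :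
    let l : Fin 4 → (Fin 3 → ℝ) := fun i => xv i - x
    let σ : Fin 4 → ℝ := fun i => β ⬝ᵥ l i
    let DV : Matrix (Fin 4) (Fin 4) ℝ :=
      Matrix.of fun i c => if h : (c : ℕ) < 3 then l i ⟨c, h⟩ else B1 ε (σ i)
    |DV.det| = (∑ i, lam i * B1 ε (σ i)) *
        |Matrix.det (Matrix.of fun i j : Fin 3 => (xv j.succ - xv 0) i)| ∧
    IsUnit DV.det ∧
    ∃! p : Fin 4 → ℝ, DV.mulVec p = B1 ε (-σ 0) • (Pi.single (0 : Fin 4) (1 : ℝ) : Fin 4 → ℝ) := by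
  intro l σ DV
  have hl : ∑ i, lam i • l i = 0 := by
    simp only [l, smul_sub, Finset.sum_sub_distrib, ← Finset.sum_smul, hlam1, one_smul, hlamx,
      sub_self]
  -- `DV` is `snocCol l (fun i => B1 ε (σ i))` by definition.
  have hdet : DV.det = (lam ⬝ᵥ fun i => B1 ε (σ i)) *
      -(of fun i j : Fin 3 => (xv j.succ - xv 0) i).det := by
    rw [← det_snocCol_sub_one]
    exact det_snocCol_eq_dotProduct_mul l hlam1 hl _
  have hpos : 0 < lam ⬝ᵥ fun i => B1 ε (σ i) :=
    dotProduct_pos_of_sum_eq_one hlam0 hlam1 fun i => B1_pos hε _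
  have hunit : IsUnit DV.det := by
    rw [hdet, isUnit_iff_ne_zero]
    exact mul_ne_zero hpos.ne' (neg_ne_zero.2 hx)
  have hDV : IsUnit DV := (isUnit_iff_isUnit_det DV).2 hunit
  refine ⟨?_, hunit, ?_⟩
  · rw [hdet, abs_mul, abs_neg, abs_of_pos hpos]
    rfl
  · exact Function.Bijective.existsUnique
      ⟨mulVec_injective_iff_isUnit.2 hDV, mulVec_surjective_iff_isUnit.2 hDV⟩ _
end

section
/- Let x₁,x₂,x₃,x₄ ∈ ℝ³ be affinely independent (i.e. det[x₂−x₁, x₃−x₁, x₄−x₁] ≠ 0), let T be their closed convex hull. Fix 1 ≤ i < j ≤ 4 and 1 ≤ s < t ≤ 4, and let x be any point of the closed segment from x_s to x_t. With lᵢ := xᵢ − x, a fixed β ∈ ℝ³, σᵢ := ⟨β, lᵢ⟩, and ε > 0, the unique solution (j^E,φ) ∈ ℝ³×ℝ³ of D^E(x)·(j^E;φ) = B₂^ε(σⱼ−σᵢ, −σᵢ)·e_{ij} (where e_{ij} is the standard unit vector of ℝ⁶ corresponding to the row (i,j)) satisfies ⟨φ, x_t − x_s⟩ = 1 if (s,t)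 = (i,j) and ⟨φ, x_t − x_s⟩ = 0 otherwise; equivalently, the tangential component of the H(curl) basis function φ^E_{ij} along the edge E_{st} equals δ_{is}δ_{jt}/|E_{st}| at every point of that edge (edge degrees of freedom of the exponentially-fitted space S¹_{1⁻}(T)). -/
open Real Matrix

/-- The 2D Bernoulli function
`B₂^ε(σ₁,σ₂) := ε·∫₀¹ exp(σ₁x₁/ε) dx₁ / (2∫₀¹∫₀^{1−x₂} exp((σ₁x₁+σ₂x₂)/ε) dx₁dx₂)`. -/
noncomputable def B2 (ε σ₁ σ₂ : ℝ) : ℝ :=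
  ε * (∫ x in (0:ℝ)..1, Real.exp (σ₁ * x / ε)) /
    (2 * ∫ x₂ in (0:ℝ)..1, ∫ x₁ in (0:ℝ)..(1 - x₂),
      Real.exp ((σ₁ * x₁ + σ₂ * x₂) / ε))

/-- The six edges `(s,t)`, `s < t`, of a tetrahedron, in lexicographic order. -/
def edgePair : Fin 6 → Fin 4 × Fin 4 := ![(0,1), (0,2), (0,3), (1,2), (1,3), (2,3)]

/-!
On the edge `E_{st}` write `x = a x_s + b x_t` with `a + b = 1`. Then `l_s = -b e` and
`l_t = a e` with `e = x_t - x_s`, so `l_s × l_t = 0` and row `(s,t)` of `D^E(x)` reads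
`(b B₂(σ_s,σ_t) + a B₂(σ_t,σ_s)) ⟨φ, e⟩ = (right-hand side)_{st}`. With `κ = ⟨β, e⟩` the
coefficient is `B₂(κ, bκ) > 0`: after rescaling, the two numerators add up to
`∫_{-b}^{a} exp(κy/ε) dy = e^{-bκ/ε} ∫_0^1 exp(κy/ε) dy`, while both triangle integrals in the
denominators equal `e^{-bκ/ε}` times the one of `B₂(κ, bκ)`, by the symmetry of the triangle and
the reflection `x₁ ↦ 1 - x₂ - x₁`. The right-hand side of row `(s,t)` is `B₂(κ, bκ)` if
`(s,t) = (i,j)` and `0` otherwise.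
-/

open intervalIntegral

section Bernoulli

variable (ε : ℝ)

noncomputable def expPrimitive (σ u : ℝ) : ℝ := ∫ x in (0:ℝ)..u, exp (σ * x / ε)

noncomputable def triangleExpIntegral (p q : ℝ) : ℝ :=
  ∫ y in (0:ℝ)..1, ∫ x in (0:ℝ)..(1 - y), exp ((p * x + q * y) / ε)

theorem B2_eq (σ₁ σ₂ : ℝ) :
    B2 ε σ₁ σ₂ = ε * expPrimitive ε σ₁ 1 / (2 * triangleExpIntegral ε σ₁ σ₂) := rfl

theorem continuous_exp_mul_div (σ : ℝ) : Continuous fun x : ℝ => exp (σ * x / ε) := by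
  fun_prop

theorem continuous_expPrimitive (σ : ℝ) : Continuous (expPrimitive ε σ) :=
  continuous_primitive (fun a b => (continuous_exp_mul_div ε σ).intervalIntegrable a b) 0

theorem hasDerivAt_expPrimitive (σ u : ℝ) :
    HasDerivAt (expPrimitive ε σ) (exp (σ * u / ε)) u :=
  integral_hasDerivAt_right ((continuous_exp_mul_div ε σ).intervalIntegrable 0 u)
    (continuous_exp_mul_div ε σ).stronglyMeasurable.stronglyMeasurableAtFilter
    (continuous_exp_mul_div ε σ).continuousAt

theorem expPrimitive_zero (σ : ℝ) : expPrimitive ε σ 0 = 0 := integral_same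

theorem expPrimitive_pos (σ : ℝ) {u : ℝ} (hu : 0 < u) : 0 < expPrimitive ε σ u :=
  intervalIntegral_pos_of_pos ((continuous_exp_mul_div ε σ).intervalIntegrable 0 u)
    (fun _ => exp_pos _) hu

theorem mul_expPrimitive_mul_one (κ c : ℝ) :
    c * expPrimitive ε (c * κ) 1 = expPrimitive ε κ c := by
  have h := smul_integral_comp_mul_right (fun x => exp (κ * x / ε)) (a := 0) (b := 1) c
  simp only [zero_mul, one_mul, smul_eq_mul] at h
  rw [expPrimitive, expPrimitive, ← h]
  congr 2 with x
  ring_nf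

theorem triangleExpIntegral_eq_integral (p q : ℝ) :
    triangleExpIntegral ε p q = ∫ y in (0:ℝ)..1, exp (q * y / ε) * expPrimitive ε p (1 - y) := by
  refine integral_congr fun y _ => ?_
  simp only [expPrimitive, ← integral_const_mul, ← exp_add]
  congr 2 with x
  ring_nf

theorem triangleExpIntegral_pos (p q : ℝ) : 0 < triangleExpIntegral ε p q := by
  rw [triangleExpIntegral_eq_integral]
  refine intervalIntegral_pos_of_pos_on ?_ (fun y hy => ?_) one_pos
  · exact ((continuous_exp_mul_div ε q).mul ((continuous_expPrimitive ε p).comp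
      (continuous_const.sub continuous_id))).intervalIntegrable 0 1
  · exact mul_pos (exp_pos _) (expPrimitive_pos ε p (by linarith [hy.2]))

/-- One integration by parts in `y` replaces swapping the coordinates of the triangle by Fubini. -/
theorem triangleExpIntegral_comm (p q : ℝ) :
    triangleExpIntegral ε p q = triangleExpIntegral ε q p := by
  have hderiv : ∀ y ∈ Set.uIcc (0:ℝ) 1, HasDerivAt (fun y => expPrimitive ε p (1 - y))
      (-exp (p * (1 - y) / ε)) y := fun y _ =>
    (hasDerivAt_expPrimitive ε p (1 - y)).comp_const_sub 1 y
  have hIBP := integral_mul_deriv_eq_deriv_mul (fun y _ => hasDerivAt_expPrimitive ε q y) hderiv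
    ((continuous_exp_mul_div ε q).intervalIntegrable 0 1)
    (((continuous_exp_mul_div ε p).comp (continuous_const.sub continuous_id)).neg.intervalIntegrable
      0 1)
  simp only [sub_self, sub_zero, expPrimitive_zero, mul_zero, zero_mul, mul_neg,
    integral_neg] at hIBP
  have hreflect := integral_comp_sub_left
    (fun y => expPrimitive ε q y * exp (p * (1 - y) / ε)) 1 (a := 0) (b := 1)
  simp only [sub_sub_cancel, sub_zero, sub_self] at hreflect
  rw [triangleExpIntegral_eq_integral, triangleExpIntegral_eq_integral]
  calc _ = ∫ y in (0:ℝ)..1, expPrimitive ε q y * exp (p * (1 - y) / ε) := by linarith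
    _ = ∫ y in (0:ℝ)..1, exp (p * y / ε) * expPrimitive ε q (1 - y) := by
      simp_rw [← hreflect, mul_comm]

/-- The reflection `x ↦ 1 - y - x` of each horizontal slice of the triangle. -/
theorem triangleExpIntegral_eq_exp_mul (p q : ℝ) :
    triangleExpIntegral ε p q = exp (p / ε) * triangleExpIntegral ε (-p) (q - p) := by
  rw [triangleExpIntegral, triangleExpIntegral, ← integral_const_mul]
  refine integral_congr fun y _ => ?_
  have hreflect := integral_comp_sub_left
    (fun x => exp ((p * x + q * y) / ε)) (1 - y) (a := 0) (b := 1 - y)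
  simp only [sub_self, sub_zero] at hreflect
  rw [← integral_const_mul, ← hreflect]
  simp only [← exp_add]
  congr 2 with x
  ring_nf

variable {ε}

theorem B2_pos (hε : 0 < ε) (σ₁ σ₂ : ℝ) : 0 < B2 ε σ₁ σ₂ := by
  rw [B2_eq]
  have := expPrimitive_pos ε σ₁ one_pos
  have := triangleExpIntegral_pos ε σ₁ σ₂
  positivity

variable {a b : ℝ}

/-- Both sides are `∫ exp (κ x / ε)` over `[-b, a]`, split at `0` on the left. -/
theorem mul_expPrimitive_add_mul_expPrimitive (hab : a + b = 1) (κ : ℝ) :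
    b * expPrimitive ε (-(b * κ)) 1 + a * expPrimitive ε (a * κ) 1
      = exp (-(b * κ) / ε) * expPrimitive ε κ 1 := by
  have hleft : b * expPrimitive ε (-(b * κ)) 1 = ∫ x in -b..0, exp (κ * x / ε) := by
    rw [integral_symm, ← expPrimitive, ← mul_expPrimitive_mul_one ε κ (-b)]
    simp only [neg_mul, neg_neg]
  have hshift := integral_comp_sub_right (fun x => exp (κ * x / ε)) b (a := 0) (b := 1)
  rw [zero_sub, show 1 - b = a by linarith] at hshift
  rw [hleft, mul_expPrimitive_mul_one, expPrimitive, expPrimitive,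
    integral_add_adjacent_intervals ((continuous_exp_mul_div ε κ).intervalIntegrable _ _)
      ((continuous_exp_mul_div ε κ).intervalIntegrable _ _),
    ← integral_const_mul, ← hshift]
  congr 1 with x
  rw [← exp_add]
  ring_nf

theorem triangleExpIntegral_mul_neg_mul (hab : a + b = 1) (κ : ℝ) :
    triangleExpIntegral ε (a * κ) (-(b * κ))
      = exp (-(b * κ) / ε) * triangleExpIntegral ε κ (b * κ) := by
  have e1 : -(b * κ) - a * κ = -κ := by linear_combination (-κ) * hab
  have e2 : b * κ - κ = -(a * κ) := by linear_combination κ * hab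
  have e3 : -(b * κ) + κ = a * κ := by linear_combination (-κ) * hab
  rw [triangleExpIntegral_eq_exp_mul ε (a * κ), e1, triangleExpIntegral_eq_exp_mul ε κ, e2,
    triangleExpIntegral_comm ε (-(a * κ)), ← mul_assoc, ← exp_add, ← add_div, e3]

theorem mul_B2_add_mul_B2 (hab : a + b = 1) (κ : ℝ) :
    b * B2 ε (-(b * κ)) (a * κ) + a * B2 ε (a * κ) (-(b * κ)) = B2 ε κ (b * κ) := by
  have hD := triangleExpIntegral_pos ε κ (b * κ)
  rw [B2_eq, B2_eq, B2_eq, triangleExpIntegral_comm ε (-(b * κ)),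
    triangleExpIntegral_mul_neg_mul hab]
  calc _ = ε * (b * expPrimitive ε (-(b * κ)) 1 + a * expPrimitive ε (a * κ) 1)
        / (2 * (exp (-(b * κ) / ε) * triangleExpIntegral ε κ (b * κ))) := by ring
    _ = _ := by
      rw [mul_expPrimitive_add_mul_expPrimitive hab]
      field_simp

end Bernoulli

section Geometry

variable {E : Type*} [AddCommGroup E] [Module ℝ E] {a b : ℝ}

theorem left_sub_smul_add_smul (hab : a + b = 1) (y z : E) :
    y - (a • y + b • z) = (-b) • (z - y) := by
  linear_combination (norm := module) (-1 : ℝ) • hab • y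

theorem right_sub_smul_add_smul (hab : a + b = 1) (y z : E) :
    z - (a • y + b • z) = a • (z - y) := by
  linear_combination (norm := module) (-1 : ℝ) • hab • z

end Geometry

theorem smul_cross_smul_self {R : Type*} [CommRing R] (c d : R) (v : Fin 3 → R) :
    (c • v) ⨯₃ (d • v) = 0 := by
  simp only [map_smul, LinearMap.smul_apply, cross_self, smul_zero]

theorem mulVec_apply_of_dite_lt {R n : Type*} [NonUnitalNonAssocSemiring R] {m k : ℕ}
    (u : n → Fin m → R) (v : n → Fin k → R) (p : Fin (m + k) → R) (r : n) :
    ((Matrix.of fun r (c : Fin (m + k)) =>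
        if h : (c : ℕ) < m then u r ⟨c, h⟩ else v r ⟨(c : ℕ) - m, by omega⟩) *ᵥ p) r
      = u r ⬝ᵥ (fun c : Fin m => p ⟨c, by omega⟩)
        + v r ⬝ᵥ (fun c : Fin k => p ⟨c + m, by omega⟩) := by
  simp only [mulVec, dotProduct, of_apply, Fin.sum_univ_add]
  congr 1 <;> refine Finset.sum_congr rfl fun c _ => ?_
  · simp [Fin.castAdd, Fin.castLE]
  · simp [Fin.natAdd, add_comm]

/-- Row `(s,t)` of `D^E(x)`, applied to `(ψ; φ)`, when `x` lies on the edge `E_{st}`. -/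
theorem edgeRow_eq {ε a b : ℝ} (hab : a + b = 1) {β e ls lt : Fin 3 → ℝ} (hls : ls = (-b) • e)
    (hlt : lt = a • e) (ψ φ : Fin 3 → ℝ) :
    (fun c => (ls ⨯₃ lt) c / 2) ⬝ᵥ ψ
        + (fun c => -B2 ε (β ⬝ᵥ ls) (β ⬝ᵥ lt) * ls c + B2 ε (β ⬝ᵥ lt) (β ⬝ᵥ ls) * lt c) ⬝ᵥ φ
      = B2 ε (β ⬝ᵥ e) (b * β ⬝ᵥ e) * (φ ⬝ᵥ e) := by
  have hcoef : ∀ X Y : ℝ, (fun c => -X * ((-b) • e) c + Y * (a • e) c) = (b * X + a * Y) • e :=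
    fun X Y => by ext c; simp only [Pi.smul_apply, smul_eq_mul]; ring
  subst hls hlt
  simp only [smul_cross_smul_self, Pi.zero_apply, zero_div, zero_dotProduct', zero_add, hcoef,
    smul_dotProduct]
  simp only [dotProduct_smul, smul_eq_mul, neg_mul]
  rw [mul_B2_add_mul_B2 hab, dotProduct_comm e φ]

theorem exists_edgePair_eq : ∀ s t : Fin 4, s < t → ∃ r, edgePair r = (s, t) := by
  decide

/-- **Edge degrees of freedom of the exponentially-fitted space `S¹_{1⁻}(T)`.**
For `x` on the closed edge from `x_s` to `x_t`, every solution `(j^E;φ)` of the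
`L¹`-spline system `D^E(x)·(j^E;φ) = B₂^ε(σⱼ−σᵢ, −σᵢ)·e_{ij}` satisfies
`⟨φ, x_t − x_s⟩ = δ_{is}δ_{jt}`; i.e. the tangential component of the basis
function `φ^E_{ij}` along the edge `E_{st}` equals `δ_{is}δ_{jt}/|E_{st}|`. -/
theorem L1_spline_edge_dofs
    (xv : Fin 4 → (Fin 3 → ℝ))
    (i j s t : Fin 4) (hst : s < t)
    (x : Fin 3 → ℝ) (hxseg : x ∈ segment ℝ (xv s) (xv t))
    (β : Fin 3 → ℝ) (ε : ℝ) (hε : 0 < ε) :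
    let l : Fin 4 → (Fin 3 → ℝ) := fun k => xv k - x
    let σ : Fin 4 → ℝ := fun k => β ⬝ᵥ l k
    let DE : Matrix (Fin 6) (Fin 6) ℝ :=
      Matrix.of fun r c =>
        if h : (c : ℕ) < 3 then
          (l (edgePair r).1 ⨯₃ l (edgePair r).2) ⟨c, h⟩ / 2
        else
          -B2 ε (σ (edgePair r).1) (σ (edgePair r).2) *
              l (edgePair r).1 ⟨(c : ℕ) - 3, by omega⟩
            + B2 ε (σ (edgePair r).2) (σ (edgePair r).1) *
              l (edgePair r).2 ⟨(c : ℕ) - 3, by omega⟩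
    ∀ p : Fin 6 → ℝ,
      DE.mulVec p =
        B2 ε (σ j - σ i) (-σ i) •
          (fun r : Fin 6 => if edgePair r = (i, j) then (1 : ℝ) else 0) →
      (fun c : Fin 3 => p ⟨(c : ℕ) + 3, by omega⟩) ⬝ᵥ (xv t - xv s)
        = if i = s ∧ j = t then 1 else 0 := by
  intro l σ DE p hp
  obtain ⟨a, b, -, -, hab, rfl⟩ := hxseg
  have hls : l s = (-b) • (xv t - xv s) := left_sub_smul_add_smul hab _ _
  have hlt : l t = a • (xv t - xv s) := right_sub_smul_add_smul hab _ _
  obtain ⟨r, hr⟩ := exists_edgePair_eq s t hst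
  have hrow := (mulVec_apply_of_dite_lt (m := 3) (k := 3)
    (fun r c => (l (edgePair r).1 ⨯₃ l (edgePair r).2) c / 2)
    (fun r c => -B2 ε (σ (edgePair r).1) (σ (edgePair r).2) * l (edgePair r).1 c
      + B2 ε (σ (edgePair r).2) (σ (edgePair r).1) * l (edgePair r).2 c) p r).symm.trans
    (congrFun hp r)
  simp only [σ, hr] at hrow
  rw [edgeRow_eq hab hls hlt] at hrow
  refine mul_left_cancel₀ (B2_pos hε _ _).ne' (hrow.trans ?_)
  by_cases hedge : i = s ∧ j = t
  · obtain ⟨rfl, rfl⟩ := hedge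
    have hdiff : l j - l i = xv j - xv i := sub_sub_sub_cancel_right _ _ _
    rw [← dotProduct_sub, hdiff, hls, dotProduct_smul, smul_eq_mul, neg_mul, neg_neg]
    simp [hr]
  · have hne : edgePair r ≠ (i, j) := by
      rw [hr, Ne, Prod.mk.injEq]; exact fun h => hedge ⟨h.1.symm, h.2.symm⟩
    simp [hne, hedge]
end

section
/- Let x₁,x₂,x₃,x₄ ∈ ℝ³ be affinely independent (i.e. det[x₂−x₁, x₃−x₁, x₄−x₁] ≠ 0), let T be their closed convex hull, and let x ∈ T. Let ε > 0, θ ∈ ℝ³, β := εθ, lᵢ := xᵢ − x and σᵢ := ⟨β, lᵢ⟩. For any q ∈ ℝ, the unique solution (j,φ) ∈ ℝ³×ℝ of the linear system D^V(x)·(j;φ) = (q·exp(−⟨θ,x₁⟩)·B₁^ε(−σ₁), q·exp(−⟨θ,x₂⟩)·B₁^ε(−σ₂), q·exp(−⟨θ,x₃⟩)·B₁^ε(−σ₃), q·exp(−⟨θ,x₄⟩)·B₁^ε(−σ₄))ᵀ satisfies j = 0 and φ = q·exp(−⟨θ,x⟩). (This is the kernel-preservation property of the weighted interpolation onto S⁰_{1⁻}(T):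 for w(y) = q·exp(−⟨θ,y⟩) ∈ ker(J⁰_θ) with constant θ, the discrete flux of Π⁰_{θ,T}w vanishes identically.) -/
open Real Matrix

theorem integral_exp_mul_div_pos (ε σ : ℝ) : 0 < ∫ x in (0:ℝ)..1, exp (σ * x / ε) :=
  intervalIntegral.intervalIntegral_pos_of_pos
    ((by fun_prop : Continuous _).intervalIntegrable 0 1) (fun _ ↦ exp_pos _) zero_lt_one

theorem B1_neg (ε σ : ℝ) : B1 ε (-σ) = exp (σ / ε) * B1 ε σ := by
  have hreflect : ∫ x in (0:ℝ)..1, exp (-σ * x / ε)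
      = exp (-σ / ε) * ∫ x in (0:ℝ)..1, exp (σ * x / ε) := by
    have hsplit (x : ℝ) : exp (-σ * x / ε) = exp (-σ / ε) * exp (σ * (1 - x) / ε) := by
      rw [← exp_add]; ring_nf
    simp_rw [hsplit, intervalIntegral.integral_const_mul]
    simpa using congrArg (exp (-σ / ε) * ·)
      (intervalIntegral.integral_comp_sub_left (fun y ↦ exp (σ * y / ε)) (1 : ℝ) (a := 0) (b := 1))
  have hI := (integral_exp_mul_div_pos ε σ).ne'
  rw [B1, B1, hreflect, neg_div, exp_neg]
  field_simp

theorem eq_zero_of_map_sub_add_mul_eq_zero {ι E : Type*} [AddCommGroup E] [Module ℝ E]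
    {v : ι → E} {x : E} (hx : x ∈ convexHull ℝ (Set.range v)) (f : E →ₗ[ℝ] ℝ)
    {b : ι → ℝ} (hb : ∀ i, 0 < b i) {t : ℝ} (h : ∀ i, f (v i - x) + b i * t = 0) : t = 0 := by
  have hcv := convex_convexHull ℝ (Set.range v)
  rcases lt_trichotomy t 0 with ht | ht | ht
  · obtain ⟨_, ⟨i, rfl⟩, hi⟩ :=
      (f.concaveOn hcv).exists_le_of_mem_convexHull (subset_convexHull ℝ _) hx
    nlinarith [h i, hb i, map_sub f (v i) x]
  · exact ht
  · obtain ⟨_, ⟨i, rfl⟩, hi⟩ :=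
      (f.convexOn hcv).exists_ge_of_mem_convexHull (subset_convexHull ℝ _) hx
    nlinarith [h i, hb i, map_sub f (v i) x]

theorem eq_zero_of_forall_sub_dotProduct_eq_zero {n : ℕ} {v : Fin (n + 1) → Fin n → ℝ}
    (hv : (of fun i j : Fin n ↦ (v j.succ - v 0) i).det ≠ 0) (x : Fin n → ℝ) {u : Fin n → ℝ}
    (h : ∀ i, (v i - x) ⬝ᵥ u = 0) : u = 0 := by
  refine eq_zero_of_vecMul_eq_zero hv (funext fun j ↦ ?_)
  change u ⬝ᵥ (v j.succ - v 0) = 0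
  rw [dotProduct_comm, show v j.succ - v 0 = (v j.succ - x) - (v 0 - x) by abel, sub_dotProduct,
    h, h, sub_zero]

theorem mulVec_of_dite_lt {R m : Type*} [Semiring R] [Fintype m] {n : ℕ} (l : m → Fin n → R)
    (b : m → R) (p : Fin (n + 1) → R) :
    (of fun i (c : Fin (n + 1)) ↦ if h : (c : ℕ) < n then l i ⟨c, h⟩ else b i) *ᵥ p
      = fun i ↦ l i ⬝ᵥ (fun k ↦ p k.castSucc) + b i * p (Fin.last n) := by
  funext i
  simp [mulVec, dotProduct, Fin.sum_univ_castSucc]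

/-- **Kernel preservation of the weighted interpolation onto `S⁰_{1⁻}(T)`.**
For `w(y) = q·exp(−⟨θ,y⟩) ∈ ker(J⁰_θ)` with constant `θ` and `β = εθ`,
the unique solution `(j;φ)` of
`D^V(x)·(j;φ) = (q·exp(−⟨θ,xᵢ⟩)·B₁^ε(−σᵢ))ᵢ` satisfies `j = 0` and
`φ = q·exp(−⟨θ,x⟩)`: the discrete flux of `Π⁰_{θ,T} w` vanishes identically. -/
theorem L0_kernel_preservation
    (xv : Fin 4 → (Fin 3 → ℝ))
    (hx : Matrix.det (Matrix.of fun i j : Fin 3 => (xv j.succ - xv 0) i) ≠ 0)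
    (x : Fin 3 → ℝ) (hxT : x ∈ convexHull ℝ (Set.range xv))
    (ε : ℝ) (hε : 0 < ε) (θ : Fin 3 → ℝ) (q : ℝ) :
    let β : Fin 3 → ℝ := ε • θ
    let l : Fin 4 → (Fin 3 → ℝ) := fun i => xv i - x
    let σ : Fin 4 → ℝ := fun i => β ⬝ᵥ l i
    let DV : Matrix (Fin 4) (Fin 4) ℝ :=
      Matrix.of fun i c => if h : (c : ℕ) < 3 then l i ⟨c, h⟩ else B1 ε (σ i)
    ∀ p : Fin 4 → ℝ,
      DV.mulVec p = (fun i => q * Real.exp (-(θ ⬝ᵥ xv i)) * B1 ε (-σ i)) →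
      (∀ c : Fin 4, (c : ℕ) < 3 → p c = 0) ∧
        p 3 = q * Real.exp (-(θ ⬝ᵥ x)) := by
  intro β l σ DV p hp
  set A := q * exp (-(θ ⬝ᵥ x))
  set u : Fin 3 → ℝ := fun k ↦ p k.castSucc
  have hrhs (i : Fin 4) : q * exp (-(θ ⬝ᵥ xv i)) * B1 ε (-σ i) = A * B1 ε (σ i) := by
    have hσ : σ i / ε = θ ⬝ᵥ xv i - θ ⬝ᵥ x := by
      simp only [σ, β, l, smul_dotProduct, dotProduct_sub, smul_eq_mul]
      field_simp
    rw [B1_neg, hσ, exp_sub]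
    simp only [A, exp_neg]
    field_simp
  have hrow (i : Fin 4) : (xv i - x) ⬝ᵥ u + B1 ε (σ i) * (p 3 - A) = 0 := by
    have hpi := congrFun hp i
    rw [mulVec_of_dite_lt] at hpi
    change (xv i - x) ⬝ᵥ u + B1 ε (σ i) * p 3 = _ at hpi
    linear_combination hpi + hrhs i
  have hφ : p 3 - A = 0 :=
    eq_zero_of_map_sub_add_mul_eq_zero hxT ((dotProductBilin ℝ ℝ).flip u)
      (fun i ↦ B1_pos hε (σ i)) (by simpa using hrow)
  have hu : u = 0 := eq_zero_of_forall_sub_dotProduct_eq_zero hx x fun i ↦ by simpa [hφ] using hrow i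
  exact ⟨fun c hc ↦ congrFun hu ⟨c, hc⟩, sub_eq_zero.mp hφ⟩
end
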